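/- arXiv:1512.09345 — 8 statements merged into one kernel-verified Lean document; each statement's English description precedes it below -/
import Mathlib

section
/- Two unit quaternions a and b satisfy [a,b] = aba⁻¹b⁻¹ = -1 if and only if Re(a) = 0, Re(b) = 0, and Re(ab) = 0. -/
/-!
Since `a b a⁻¹ b⁻¹ = -1` says exactly that `a` and `b` anticommute, it suffices to read off
anticommutation from real parts. Conjugation preserves the real part, so `a b a⁻¹ = -b` forces
`Re b = 0`, and symmetrically `Re a = 0`; moreover `Re (a b) = Re (b a) = -Re (a b)`.
Conversely, for pure quaternions `star (a b) = star b * star a = b a`, and `Re (a b) = 0` says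
`star (a b) = -(a b)`.
-/

open Quaternion

theorem mul_mul_inv_mul_inv_eq_neg_one_iff {D : Type*} [DivisionRing D] {a b : D}
    (ha : a ≠ 0) (hb : b ≠ 0) : a * b * a⁻¹ * b⁻¹ = -1 ↔ a * b = -(b * a) := by
  rw [mul_inv_eq_iff_eq_mul₀ hb, mul_inv_eq_iff_eq_mul₀ ha, neg_one_mul, neg_mul]

namespace Quaternion

variable {R : Type*}

theorem re_mul_comm [CommRing R] (a b : ℍ[R]) : (a * b).re = (b * a).re := by
  simp only [re_mul]
  ring

theorem mul_comm_eq_neg_of_re_eq_zero [CommRing R] [NoZeroDivisors R] [CharZero R]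
    {a b : ℍ[R]} (ha : a.re = 0) (hb : b.re = 0) (hab : (a * b).re = 0) :
    b * a = -(a * b) := by
  rw [← star_eq_neg.2 hab, star_mul, star_eq_neg.2 ha, star_eq_neg.2 hb, neg_mul_neg]

variable [Field R] [LinearOrder R] [IsStrictOrderedRing R]

theorem re_mul_mul_inv {a : ℍ[R]} (ha : a ≠ 0) (b : ℍ[R]) : (a * b * a⁻¹).re = b.re := by
  rw [re_mul_comm, inv_mul_cancel_left₀ ha]

theorem re_eq_zero_of_mul_eq_neg_mul {a b : ℍ[R]} (ha : a ≠ 0) (h : a * b = -(b * a)) :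
    b.re = 0 := by
  have hconj : a * b * a⁻¹ = -b := by rw [h, neg_mul, mul_inv_cancel_right₀ ha]
  have := re_mul_mul_inv ha b
  rw [hconj, re_neg] at this
  exact self_eq_neg.1 this.symm

theorem re_mul_eq_zero_of_mul_eq_neg_mul {a b : ℍ[R]} (h : a * b = -(b * a)) :
    (a * b).re = 0 := by
  have := re_mul_comm a b
  rw [h, re_neg] at this ⊢
  exact neg_eq_zero.2 (self_eq_neg.1 this.symm)

theorem mul_eq_neg_mul_iff {a b : ℍ[R]} (ha : a ≠ 0) (hb : b ≠ 0) :
    a * b = -(b * a) ↔ a.re = 0 ∧ b.re = 0 ∧ (a * b).re = 0 := by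
  constructor
  · intro h
    have h' : b * a = -(a * b) := by rw [h, neg_neg]
    exact ⟨re_eq_zero_of_mul_eq_neg_mul hb h', re_eq_zero_of_mul_eq_neg_mul ha h,
      re_mul_eq_zero_of_mul_eq_neg_mul h⟩
  · rintro ⟨hare, hbre, habre⟩
    rw [mul_comm_eq_neg_of_re_eq_zero hare hbre habre, neg_neg]

end Quaternion

/-- Two unit quaternions `a, b` satisfy `[a,b] = a b a⁻¹ b⁻¹ = -1` iff
`Re a = 0`, `Re b = 0` and `Re (a b) = 0`. -/
theorem commutator_eq_neg_one_iff (a b : ℍ[ℝ]) (ha : ‖a‖ = 1) (hb : ‖b‖ = 1) :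
    a * b * a⁻¹ * b⁻¹ = -1 ↔ a.re = 0 ∧ b.re = 0 ∧ (a * b).re = 0 := by
  have ha0 : a ≠ 0 := norm_ne_zero_iff.1 (ha ▸ one_ne_zero)
  have hb0 : b ≠ 0 := norm_ne_zero_iff.1 (hb ▸ one_ne_zero)
  rw [mul_mul_inv_mul_inv_eq_neg_one_iff ha0 hb0, mul_eq_neg_mul_iff ha0 hb0]
end

section
/- If p and q are unit quaternions that commute and p = e^{αP} for a purely imaginary unit quaternion P with sin α ≠ 0, then q = e^{βP} for some real β. -/
/-!
Since `sin α ≠ 0`, commuting with `p = cos α + sin α • P` is the same as commuting with `P`.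
For commuting purely imaginary `P` and `v`, `star (P * v) = v * P = P * v`, so `P * v = r` is
real; with `P * P = -‖P‖²` this gives `v = -(r / ‖P‖²) • P`. Applied to `v = q.im` it puts `q`
in `ℝ + ℝP`, and `‖q‖ = 1` puts the two coordinates on the unit circle.
-/

open Quaternion

theorem Commute.of_algebraMap_add_smul_left {R A : Type*} [Field R] [Ring A] [Algebra R A]
    {c s : R} {P q : A} (hs : s ≠ 0) (h : Commute (algebraMap R A c + s • P) q) :
    Commute P q := by
  have hsP : Commute (s • P) q := by
    simpa using h.sub_left (Algebra.commute_algebraMap_left c q)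
  simpa [hs] using hsP.smul_left s⁻¹

theorem Real.exists_cos_eq_and_sin_eq {a b : ℝ} (h : a ^ 2 + b ^ 2 = 1) :
    ∃ β : ℝ, Real.cos β = a ∧ Real.sin β = b := by
  have hz : ‖(⟨a, b⟩ : ℂ)‖ = 1 := by
    rw [Complex.norm_eq_sqrt_sq_add_sq]; simp [h]
  refine ⟨Complex.arg ⟨a, b⟩, ?_, ?_⟩
  · rw [Complex.cos_arg (norm_ne_zero_iff.mp (hz.symm ▸ one_ne_zero)), hz, div_one]
  · rw [Complex.sin_arg, hz, div_one]

namespace Quaternion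

variable {R : Type*} [Field R] [LinearOrder R] [IsStrictOrderedRing R] {P q : ℍ[R]}

theorem mul_self_eq_neg_normSq_of_re_eq_zero (hP : P.re = 0) :
    P * P = -((normSq P : R) : ℍ[R]) := by
  rw [← star_mul_self, star_eq_neg.mpr hP, neg_mul, neg_neg]

theorem mul_eq_coe_re_of_commute (hP : P.re = 0) (hq : q.re = 0) (h : Commute P q) :
    P * q = ((P * q).re : ℍ[R]) := by
  rw [← star_eq_self, star_mul, star_eq_neg.mpr hP, star_eq_neg.mpr hq, neg_mul_neg]
  exact h.symm.eq

theorem exists_eq_coe_add_smul_of_commute (hP : P.re = 0) (hP0 : P ≠ 0) (h : Commute P q) :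
    ∃ t : R, q = (q.re : ℍ[R]) + t • P := by
  have him : Commute P q.im := by
    simpa using h.sub_right (Algebra.commute_algebraMap_right q.re P)
  set r := (P * q.im).re
  have hr : P * q.im = r := mul_eq_coe_re_of_commute hP q.re_im him
  have hn : normSq P ≠ 0 := normSq_eq_zero.not.mpr hP0
  have hsmul_im : normSq P • q.im = -(r • P) := by
    rw [← coe_mul_eq_smul, ← neg_neg ((normSq P : R) : ℍ[R]),
      ← mul_self_eq_neg_normSq_of_re_eq_zero hP, neg_mul, mul_assoc, hr, ← coe_commutes,
      coe_mul_eq_smul]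
  refine ⟨-(r / normSq P), ?_⟩
  calc q = q.re + q.im := (re_add_im q).symm
    _ = q.re + (normSq P)⁻¹ • (normSq P • q.im) := by rw [inv_smul_smul₀ hn]
    _ = q.re + -(r / normSq P) • P := by
      rw [hsmul_im, smul_neg, smul_smul, neg_smul, inv_mul_eq_div]

theorem normSq_coe_add_smul (hP : P.re = 0) (c t : R) :
    normSq ((c : ℍ[R]) + t • P) = c ^ 2 + t ^ 2 * normSq P := by
  rw [normSq_add, normSq_coe, normSq_smul]
  simp [hP]

end Quaternion

theorem commuting_with_exp_mem_circle_general (p q P : ℍ[ℝ]) (α : ℝ)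
    (hq : ‖q‖ = 1) (hP : P.re = 0) (hPnorm : ‖P‖ = 1)
    (hcomm : p * q = q * p)
    (hpform : p = (Real.cos α : ℍ[ℝ]) + Real.sin α • P)
    (hsin : Real.sin α ≠ 0) :
    ∃ β : ℝ, q = (Real.cos β : ℍ[ℝ]) + Real.sin β • P := by
  subst hpform
  have hPq : Commute P q := Commute.of_algebraMap_add_smul_left hsin hcomm
  have hP0 : P ≠ 0 := norm_ne_zero_iff.mp (hPnorm ▸ one_ne_zero)
  obtain ⟨t, hqt⟩ := exists_eq_coe_add_smul_of_commute hP hP0 hPq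
  have hunit : q.re ^ 2 + t ^ 2 = 1 := by
    have h := normSq_coe_add_smul hP q.re t
    rwa [← hqt, normSq_eq_norm_mul_self, normSq_eq_norm_mul_self, hq, hPnorm, one_mul, mul_one,
      eq_comm] at h
  obtain ⟨β, hβcos, hβsin⟩ := Real.exists_cos_eq_and_sin_eq hunit
  exact ⟨β, by rw [hβcos, hβsin]; exact hqt⟩

/-- If unit quaternions `p, q` commute and `p = e^{αP} = cos α + sin α • P` for a purely
imaginary unit quaternion `P` with `sin α ≠ 0`, then `q = e^{βP}` for some real `β`. -/
theorem commuting_with_exp_mem_circle (p q P : ℍ[ℝ]) (α : ℝ)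
    (hp : ‖p‖ = 1) (hq : ‖q‖ = 1) (hP : P.re = 0) (hPnorm : ‖P‖ = 1)
    (hcomm : p * q = q * p)
    (hpform : p = (Real.cos α : ℍ[ℝ]) + Real.sin α • P)
    (hsin : Real.sin α ≠ 0) :
    ∃ β : ℝ, q = (Real.cos β : ℍ[ℝ]) + Real.sin β • P :=
  commuting_with_exp_mem_circle_general p q P α hq hP hPnorm hcomm hpform hsin
end

section
/- If a', b', c', d' are unit quaternions with Re(i·a') = Re(i·b') = Re(i·c') = Re(i·d') = 0, then Re(i·a'b'c'd') = -Re(i·d'c'b'a'). -/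
/-! The map `q ↦ q.re - q.imI i + q.imJ j + q.imK k`, i.e. `q ↦ -i q̄ i`, reverses products and
fixes `1, j, k`. Since `Re(i q) = -q.imI`, the hypotheses put `a, b, c, d` in the span of `1, j, k`,
so this map sends `a b c d` to `d c b a`; as it negates the `i`-component, the `i`-components of
`a b c d` and `d c b a` are opposite. -/

open Quaternion

/-- The quaternion unit `i`. -/
def qi : ℍ[ℝ] := ⟨0, 1, 0, 0⟩

namespace Quaternion

variable {R : Type*} [CommRing R]

def negImI (q : ℍ[R]) : ℍ[R] := ⟨q.re, -q.imI, q.imJ, q.imK⟩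

@[simp] theorem re_negImI (q : ℍ[R]) : (negImI q).re = q.re := rfl
@[simp] theorem imI_negImI (q : ℍ[R]) : (negImI q).imI = -q.imI := rfl
@[simp] theorem imJ_negImI (q : ℍ[R]) : (negImI q).imJ = q.imJ := rfl
@[simp] theorem imK_negImI (q : ℍ[R]) : (negImI q).imK = q.imK := rfl

theorem negImI_mul (p q : ℍ[R]) : negImI (p * q) = negImI q * negImI p := by
  ext <;> simp only [re_negImI, imI_negImI, imJ_negImI, imK_negImI, re_mul, imI_mul, imJ_mul,
    imK_mul] <;> ring

theorem negImI_eq_self {q : ℍ[R]} (h : q.imI = 0) : negImI q = q := by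
  ext <;> simp [h]

end Quaternion

theorem re_qi_mul (q : ℍ[ℝ]) : (qi * q).re = -q.imI := by
  rw [re_mul]
  simp [qi]

theorem re_i_mul_prod_antisymm_general (a b c d : ℍ[ℝ])
    (ha : (qi * a).re = 0) (hb : (qi * b).re = 0)
    (hc : (qi * c).re = 0) (hd : (qi * d).re = 0) :
    (qi * (a * b * c * d)).re = -(qi * (d * c * b * a)).re := by
  rw [re_qi_mul, neg_eq_zero] at ha hb hc hd
  have hrev : negImI (a * b * c * d) = d * c * b * a := by
    simp only [negImI_mul, negImI_eq_self ha, negImI_eq_self hb, negImI_eq_self hc,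
      negImI_eq_self hd, mul_assoc]
  rw [re_qi_mul, re_qi_mul, ← hrev, imI_negImI, neg_neg]

/-- If `a', b', c', d'` are unit quaternions with
`Re(i a') = Re(i b') = Re(i c') = Re(i d') = 0`, then `Re(i a'b'c'd') = -Re(i d'c'b'a')`. -/
theorem re_i_mul_prod_antisymm (a b c d : ℍ[ℝ])
    (ha' : ‖a‖ = 1) (hb' : ‖b‖ = 1) (hc' : ‖c‖ = 1) (hd' : ‖d‖ = 1)
    (ha : (qi * a).re = 0) (hb : (qi * b).re = 0)
    (hc : (qi * c).re = 0) (hd : (qi * d).re = 0) :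
    (qi * (a * b * c * d)).re = -(qi * (d * c * b * a)).re :=
  re_i_mul_prod_antisymm_general a b c d ha hb hc hd
end

section
/- If a, b, c, d are unit quaternions satisfying abcd = dcba, and x is a purely imaginary unit quaternion with Re(xa) = Re(xb) = Re(xc) = Re(xd) = 0, then Re(x·abcd) = 0. -/
/-!
For purely imaginary `x` we have `star x = -x`, so `Re(xp) = 0` says exactly that
`x p = p̄ x`. These relations compose: `x abcd = ā b̄ c̄ d̄ x = (dcba)‾ x`, which by `abcd = dcba`
is `(abcd)‾ x`, and hence `Re(x abcd) = 0`.
-/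

open Quaternion

theorem Quaternion.semiconjBy_star_iff_re_mul_eq_zero {R : Type*} [CommRing R]
    [NoZeroDivisors R] [CharZero R] {x p : ℍ[R]} (hx : x.re = 0) :
    SemiconjBy x p (star p) ↔ (x * p).re = 0 := by
  rw [SemiconjBy, ← Quaternion.star_eq_neg, star_mul, Quaternion.star_eq_neg.mpr hx, mul_neg,
    neg_inj, eq_comm]

theorem re_x_abcd_eq_zero_general (a b c d x : ℍ[ℝ])
    (habcd : a * b * c * d = d * c * b * a)
    (hx : x.re = 0)
    (hxa : (x * a).re = 0) (hxb : (x * b).re = 0)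
    (hxc : (x * c).re = 0) (hxd : (x * d).re = 0) :
    (x * (a * b * c * d)).re = 0 := by
  have semiconj_iff := fun p : ℍ[ℝ] => Quaternion.semiconjBy_star_iff_re_mul_eq_zero (p := p) hx
  have hprod : SemiconjBy x (a * b * c * d) (star a * star b * star c * star d) :=
    ((((semiconj_iff a).mpr hxa).mul_right ((semiconj_iff b).mpr hxb)).mul_right
      ((semiconj_iff c).mpr hxc)).mul_right ((semiconj_iff d).mpr hxd)
  have hstar : star a * star b * star c * star d = star (a * b * c * d) := by
    rw [habcd]
    simp only [star_mul, mul_assoc]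
  rw [hstar] at hprod
  exact (semiconj_iff _).mp hprod

/-- If unit quaternions `a, b, c, d` satisfy `abcd = dcba` and `x` is a purely imaginary
unit quaternion with `Re(xa) = Re(xb) = Re(xc) = Re(xd) = 0`, then `Re(x·abcd) = 0`. -/
theorem re_x_abcd_eq_zero (a b c d x : ℍ[ℝ])
    (ha : ‖a‖ = 1) (hb : ‖b‖ = 1) (hc : ‖c‖ = 1) (hd : ‖d‖ = 1)
    (habcd : a * b * c * d = d * c * b * a)
    (hx : x.re = 0) (hxnorm : ‖x‖ = 1)
    (hxa : (x * a).re = 0) (hxb : (x * b).re = 0)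
    (hxc : (x * c).re = 0) (hxd : (x * d).re = 0) :
    (x * (a * b * c * d)).re = 0 :=
  re_x_abcd_eq_zero_general a b c d x habcd hx hxa hxb hxc hxd
end

section
/- For any unit quaternions a, b, c, d satisfying abcd = dcba, there exists a unit quaternion x with Re(x) = Re(xa) = Re(xb) = Re(xc) = Re(xd) = Re(x·(abcd)⁻¹) = 0. -/
/-!
If `Re x = 0`, then `Re (x g) = 0` iff `x g = ḡ x`, and such `g` are closed under reversed
products: `x (abcd) = (dcba)‾ x = (abcd)‾ x`, whence `Re (x (abcd)⁻¹) = 0`. So it suffices to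
find a traceless unit `x` with `Re (x g) = 0` for `g = a, b, c, d`. The commutator `[p, q]` is
traceless with `Re ([p, q] r) = Re (pqr) - Re (rqp)`, and `(abc) d = d (cba)`, `a (bcd) = (dcb) a`
are conjugations, so `[b, c]` works unless `b` and `c` commute. Then `m = bc` satisfies
`amd = dma`, the same idea applies to `a, m, d`, and `b, c` come along because the centralizer of
a non-real `m` is `ℝ + ℝ m`. If `m` is real, `a` and `d` commute as well, and `x` only has to
avoid two directions.
-/

open Quaternion

namespace Quaternion

theorem re_mul_comm_s7 (p q : ℍ[ℝ]) : (p * q).re = (q * p).re := by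
  simp only [re_mul]; ring

theorem re_eq_of_mul_eq_mul {p q g : ℍ[ℝ]} (hg : g ≠ 0) (h : p * g = g * q) :
    p.re = q.re := by
  rw [← mul_inv_cancel_right₀ hg p, h, mul_assoc, re_mul_comm_s7, inv_mul_cancel_right₀ hg]

theorem re_commutator_mul (p q r : ℍ[ℝ]) :
    ((p * q - q * p) * r).re = (p * q * r).re - (r * q * p).re := by
  rw [sub_mul, re_sub, re_mul_comm_s7 (q * p), ← mul_assoc]

theorem mul_eq_star_mul_iff {x g : ℍ[ℝ]} (hx : x.re = 0) :
    x * g = star g * x ↔ (x * g).re = 0 := by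
  constructor
  · intro h
    rw [← star_eq_neg, star_mul, star_eq_neg.2 hx, mul_neg, ← h]
  · intro h
    simp only [re_mul, hx] at h
    ext <;> simp only [re_mul, imI_mul, imJ_mul, imK_mul, re_star, imI_star, imJ_star,
      imK_star, hx] <;> linarith

theorem mul_mul_eq_star_mul_mul {x g : ℍ[ℝ]} (hg : x * g = star g * x) (y : ℍ[ℝ]) :
    x * (g * y) = star g * (x * y) := by
  rw [← mul_assoc, hg, mul_assoc]

theorem re_mul_inv_eq_zero {x w : ℍ[ℝ]} (hx : x.re = 0) (h : (x * w).re = 0) :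
    (x * w⁻¹).re = 0 := by
  rw [inv_def, mul_smul_comm, re_smul, star_eq_two_re_sub, mul_sub, re_sub, mul_coe_eq_smul,
    re_smul, hx, h]
  simp

theorem re_mul_eq_zero_of_commute {x b m : ℍ[ℝ]} (hx : x.re = 0) (hm : m.im ≠ 0)
    (hbm : Commute b m) (hxm : (x * m).re = 0) : (x * b).re = 0 := by
  have hI := congrArg QuaternionAlgebra.imI hbm.eq
  have hJ := congrArg QuaternionAlgebra.imJ hbm.eq
  have hK := congrArg QuaternionAlgebra.imK hbm.eq
  simp only [imI_mul, imJ_mul, imK_mul] at hI hJ hK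
  simp only [re_mul, hx] at hxm ⊢
  have hm2 : normSq m.im ≠ 0 := normSq_eq_zero.not.2 hm
  simp only [normSq_def', re_im, imI_im, imJ_im, imK_im] at hm2
  refine (mul_eq_zero.1 ?_).resolve_left hm2
  -- `hI, hJ, hK` say `Im b × Im m = 0`, and `|M|² B - (B·M) M = M × (B × M)`.
  linear_combination (b.imI * m.imI + b.imJ * m.imJ + b.imK * m.imK) * hxm
    - (x.imJ * m.imK - x.imK * m.imJ) / 2 * hI - (x.imK * m.imI - x.imI * m.imK) / 2 * hJ
    - (x.imI * m.imJ - x.imJ * m.imI) / 2 * hK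

def tracelessPerp (S : Set ℍ[ℝ]) : Set ℍ[ℝ] :=
  {x | ‖x‖ = 1 ∧ x.re = 0 ∧ ∀ g ∈ S, (x * g).re = 0}

theorem tracelessPerp_anti {S T : Set ℍ[ℝ]} (h : S ⊆ T) :
    tracelessPerp T ⊆ tracelessPerp S :=
  fun _ ⟨h1, h0, hT⟩ => ⟨h1, h0, fun g hg => hT g (h hg)⟩

theorem tracelessPerp_union (S T : Set ℍ[ℝ]) :
    tracelessPerp (S ∪ T) = tracelessPerp S ∩ tracelessPerp T := by
  ext x
  simp only [tracelessPerp, Set.mem_ofPred_eq, Set.mem_inter_iff, Set.mem_union]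
  grind

theorem tracelessPerp_insert_coe (r : ℝ) (S : Set ℍ[ℝ]) :
    tracelessPerp (insert (r : ℍ[ℝ]) S) = tracelessPerp S := by
  ext x
  simp only [tracelessPerp, Set.mem_ofPred_eq, Set.forall_mem_insert, mul_coe_eq_smul,
    re_smul, smul_eq_mul]
  grind

theorem tracelessPerp_insert_of_commute {S : Set ℍ[ℝ]} {b m : ℍ[ℝ]} (hm : m.im ≠ 0)
    (hmS : m ∈ S) (h : Commute b m) : tracelessPerp (insert b S) = tracelessPerp S :=
  (tracelessPerp_anti (Set.subset_insert b S)).antisymm fun _ ⟨h1, h0, hS⟩ =>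
    ⟨h1, h0, Set.forall_mem_insert.2 ⟨re_mul_eq_zero_of_commute h0 hm h (hS m hmS), hS⟩⟩

theorem exists_tracelessPerp_pair_eq_singleton {p q : ℍ[ℝ]} (h : Commute p q) :
    ∃ u, tracelessPerp {p, q} = tracelessPerp {u} := by
  by_cases hp : p.im = 0
  · refine ⟨q, ?_⟩
    rw [← re_add_im p, hp, add_zero, tracelessPerp_insert_coe]
  · refine ⟨p, ?_⟩
    rw [Set.pair_comm, tracelessPerp_insert_of_commute hp (Set.mem_singleton p) h.symm]

theorem tracelessPerp_nonempty_of_ne_zero {S : Set ℍ[ℝ]} {k : ℍ[ℝ]} (hk : k ≠ 0)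
    (hre : k.re = 0) (hS : ∀ g ∈ S, (k * g).re = 0) : (tracelessPerp S).Nonempty := by
  refine ⟨(‖k‖⁻¹ : ℝ) • k, norm_smul_inv_norm hk, ?_, fun g hg => ?_⟩
  · rw [re_smul, hre, smul_zero]
  · rw [smul_mul_assoc, re_smul, hS g hg, smul_zero]

theorem tracelessPerp_nonempty_of_span_ne_top {S : Set ℍ[ℝ]}
    (h : Submodule.span ℝ (insert 1 S) ≠ ⊤) : (tracelessPerp S).Nonempty := by
  obtain ⟨k, hk, hk0⟩ :=
    Submodule.exists_mem_ne_zero_of_ne_bot (Submodule.orthogonal_eq_bot_iff.not.2 h)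
  have hperp : ∀ g ∈ insert 1 S, (g * star k).re = 0 := fun g hg =>
    (Submodule.mem_orthogonal _ k).1 hk g (Submodule.subset_span hg)
  have hre : k.re = 0 := by simpa using hperp 1 (Set.mem_insert 1 S)
  refine tracelessPerp_nonempty_of_ne_zero hk0 hre fun g hg => ?_
  have := hperp g (Set.mem_insert_of_mem 1 hg)
  rwa [re_mul_comm_s7, star_eq_neg.2 hre, neg_mul, re_neg, neg_eq_zero] at this

theorem tracelessPerp_pair_nonempty (u v : ℍ[ℝ]) : (tracelessPerp {u, v}).Nonempty := by
  refine tracelessPerp_nonempty_of_span_ne_top fun htop => ?_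
  classical
  have hle := finrank_span_finset_le_card (R := ℝ) ({1, u, v} : Finset ℍ[ℝ])
  rw [Finset.coe_insert, Finset.coe_pair, Set.finrank, htop, finrank_top, finrank_eq_four] at hle
  have := Finset.card_le_three (a := (1 : ℍ[ℝ])) (b := u) (c := v)
  omega

theorem tracelessPerp_nonempty_of_not_commute {S : Set ℍ[ℝ]} {p q : ℍ[ℝ]}
    (hpq : ¬Commute p q) (hS : ∀ r ∈ S, (p * q * r).re = (r * q * p).re) :
    (tracelessPerp (insert p (insert q S))).Nonempty := by
  refine tracelessPerp_nonempty_of_ne_zero (sub_ne_zero.2 hpq) ?_ fun r hr => ?_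
  · rw [re_sub, re_mul_comm_s7, sub_self]
  · rw [re_commutator_mul, sub_eq_zero]
    rcases hr with rfl | rfl | hr
    · rfl
    · rw [mul_assoc, re_mul_comm_s7]
    · exact hS r hr

theorem tracelessPerp_nonempty_of_mul_mul_eq {a m d : ℍ[ℝ]} (hm : m.im ≠ 0)
    (h : a * m * d = d * m * a) : (tracelessPerp {a, m, d}).Nonempty := by
  by_cases ham : Commute a m
  · rw [tracelessPerp_insert_of_commute hm (by simp) ham]
    exact tracelessPerp_pair_nonempty m d
  · exact tracelessPerp_nonempty_of_not_commute ham fun r hr => by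
      rw [Set.mem_singleton_iff.1 hr, h]

theorem commute_of_mul_coe_mul_eq {a d : ℍ[ℝ]} {r : ℝ} (hr : r ≠ 0)
    (h : a * r * d = d * r * a) : Commute a d := by
  rw [mul_coe_eq_smul, mul_coe_eq_smul, smul_mul_assoc, smul_mul_assoc] at h
  exact smul_right_injective _ hr h

theorem tracelessPerp_nonempty_of_mul_eq_rev {a b c d : ℍ[ℝ]} (ha : a ≠ 0) (hb : b ≠ 0)
    (hc : c ≠ 0) (hd : d ≠ 0) (h : a * b * c * d = d * c * b * a) :
    (tracelessPerp {a, b, c, d}).Nonempty := by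
  by_cases hbc : Commute b c
  · have hamd : a * (b * c) * d = d * (b * c) * a := by
      rw [← mul_assoc, h, mul_assoc d c b, ← hbc.eq]
    by_cases hm : (b * c).im = 0
    · have hr : (b * c).re ≠ 0 := fun h0 => mul_ne_zero hb hc (by
        rw [← re_add_im (b * c), hm, h0, add_zero, coe_zero])
      rw [← re_add_im (b * c), hm, add_zero] at hamd
      obtain ⟨u, hu⟩ :=
        exists_tracelessPerp_pair_eq_singleton (commute_of_mul_coe_mul_eq hr hamd)
      obtain ⟨v, hv⟩ := exists_tracelessPerp_pair_eq_singleton hbc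
      have habcd : ({a, b, c, d} : Set ℍ[ℝ]) = {a, d} ∪ {b, c} := by
        ext; simp only [Set.mem_insert_iff, Set.mem_union, Set.mem_singleton_iff]; tauto
      rw [habcd, tracelessPerp_union, hu, hv, ← tracelessPerp_union, Set.singleton_union]
      exact tracelessPerp_pair_nonempty u v
    · refine (tracelessPerp_nonempty_of_mul_mul_eq hm hamd).mono ?_
      rw [← tracelessPerp_insert_of_commute hm (by simp) ((Commute.refl b).mul_right hbc),
        ← tracelessPerp_insert_of_commute hm (by simp) (hbc.symm.mul_right (Commute.refl c))]
      exact tracelessPerp_anti fun g => by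
        simp only [Set.mem_insert_iff, Set.mem_singleton_iff]; tauto
  · have habc : (a * b * c).re = (c * b * a).re :=
      re_eq_of_mul_eq_mul hd (by rw [h]; simp only [mul_assoc])
    have hbcd : (d * c * b).re = (b * c * d).re :=
      re_eq_of_mul_eq_mul ha (by rw [← h]; simp only [mul_assoc])
    refine (tracelessPerp_nonempty_of_not_commute hbc (S := {a, d}) ?_).mono
      (tracelessPerp_anti fun g => by
        simp only [Set.mem_insert_iff, Set.mem_singleton_iff]; tauto)
    rintro r (rfl | rfl)
    · rw [re_mul_comm_s7, ← mul_assoc, habc, re_mul_comm_s7, ← mul_assoc]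
    · exact hbcd.symm

end Quaternion

/-- For unit quaternions `a, b, c, d` with `abcd = dcba`, there is a unit quaternion `x` with
`Re(x) = Re(xa) = Re(xb) = Re(xc) = Re(xd) = Re(x·(abcd)⁻¹) = 0`. -/
theorem exists_traceless_orthogonal (a b c d : ℍ[ℝ])
    (ha : ‖a‖ = 1) (hb : ‖b‖ = 1) (hc : ‖c‖ = 1) (hd : ‖d‖ = 1)
    (habcd : a * b * c * d = d * c * b * a) :
    ∃ x : ℍ[ℝ], ‖x‖ = 1 ∧ x.re = 0 ∧ (x * a).re = 0 ∧ (x * b).re = 0 ∧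
      (x * c).re = 0 ∧ (x * d).re = 0 ∧ (x * (a * b * c * d)⁻¹).re = 0 := by
  have hne : ∀ g : ℍ[ℝ], ‖g‖ = 1 → g ≠ 0 := fun g hg =>
    norm_ne_zero_iff.1 (by simp [hg])
  obtain ⟨x, hx1, hx0, hxS⟩ := tracelessPerp_nonempty_of_mul_eq_rev (hne a ha) (hne b hb)
    (hne c hc) (hne d hd) habcd
  simp only [Set.mem_insert_iff, Set.mem_singleton_iff, forall_eq_or_imp, forall_eq] at hxS
  obtain ⟨hxa, hxb, hxc, hxd⟩ := hxS
  refine ⟨x, hx1, hx0, hxa, hxb, hxc, hxd, re_mul_inv_eq_zero hx0 ?_⟩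
  rw [← mul_eq_star_mul_iff hx0] at hxa hxb hxc hxd ⊢
  calc x * (a * b * c * d) = star (d * c * b * a) * x := by
        simp only [star_mul, mul_assoc, mul_mul_eq_star_mul_mul hxa, mul_mul_eq_star_mul_mul hxb,
          mul_mul_eq_star_mul_mul hxc, hxd]
    _ = star (a * b * c * d) * x := by rw [habcd]
end

section
/- If four unit quaternions a, b, c, d pairwise commute, then there exists a purely imaginary unit quaternion x with Re(xa) = Re(xb) = Re(xc) = Re(xd) = 0. -/
/-!
For purely imaginary `x`, `Re(x a) = -⟪x, Im a⟫`. The imaginary part of the commutator `u a - a u`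
is twice the cross product of `Im u` and `Im a`, so commuting quaternions have parallel imaginary
parts, and a purely imaginary `x` orthogonal to one nonzero `Im u` is orthogonal to all of them.
Such a unit `x` exists because the orthogonal complement of `span {1, star u}` in the
four-dimensional space `ℍ` is nonzero.
-/

open Quaternion

namespace Quaternion

theorem re_mul_eq_zero_of_commute_s10 {R : Type*} [CommRing R] [NoZeroDivisors R] [CharZero R]
    {x u a : ℍ[R]} (hx : x.re = 0) (hu : u.im ≠ 0) (hua : Commute u a) (hxu : (x * u).re = 0) :
    (x * a).re = 0 := by
  have hI := congrArg QuaternionAlgebra.imI hua.eq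
  have hJ := congrArg QuaternionAlgebra.imJ hua.eq
  have hK := congrArg QuaternionAlgebra.imK hua.eq
  simp only [imI_mul, imJ_mul, imK_mul] at hI hJ hK
  simp only [re_mul, hx, zero_mul, zero_sub] at hxu
  -- Components of `x × (2 Im u × Im a) = 2 ⟪x, Im a⟫ Im u - 2 ⟪x, Im u⟫ Im a`.
  have hI' : 2 * u.imI * (x * a).re = 0 := by
    rw [re_mul, hx]
    linear_combination 2 * a.imI * hxu - x.imJ * hK + x.imK * hJ
  have hJ' : 2 * u.imJ * (x * a).re = 0 := by
    rw [re_mul, hx]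
    linear_combination 2 * a.imJ * hxu - x.imK * hI + x.imI * hK
  have hK' : 2 * u.imK * (x * a).re = 0 := by
    rw [re_mul, hx]
    linear_combination 2 * a.imK * hxu - x.imI * hJ + x.imJ * hI
  by_contra hr
  apply hu
  ext <;> simp_all

open Classical in
theorem exists_re_eq_zero_norm_eq_one_re_mul_eq_zero (u : ℍ[ℝ]) :
    ∃ x : ℍ[ℝ], x.re = 0 ∧ ‖x‖ = 1 ∧ (x * u).re = 0 := by
  set K : Submodule ℝ ℍ[ℝ] := Submodule.span ℝ ({1, star u} : Finset ℍ[ℝ])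
  have hK : Module.finrank ℝ K ≤ 2 := (finrank_span_finset_le_card _).trans Finset.card_le_two
  have hKperp : 0 < Module.finrank ℝ Kᗮ := by
    have := K.finrank_add_finrank_orthogonal
    rw [finrank_eq_four] at this
    omega
  obtain ⟨y, hyK, hy⟩ :=
    Submodule.exists_mem_ne_zero_of_ne_bot (Submodule.one_le_finrank_iff.mp hKperp)
  have hx : (‖y‖⁻¹ : ℝ) • y ∈ Kᗮ := Kᗮ.smul_mem _ hyK
  refine ⟨(‖y‖⁻¹ : ℝ) • y, ?_, norm_smul_inv_norm hy, ?_⟩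
  · simpa [inner_def] using
      K.inner_left_of_mem_orthogonal (u := 1) (Submodule.subset_span (by simp)) hx
  · simpa [inner_def] using
      K.inner_left_of_mem_orthogonal (u := star u) (Submodule.subset_span (by simp)) hx

theorem exists_re_eq_zero_norm_eq_one_forall_re_mul_eq_zero {S : Set ℍ[ℝ]}
    (hS : S.Pairwise Commute) : ∃ x : ℍ[ℝ], x.re = 0 ∧ ‖x‖ = 1 ∧ ∀ a ∈ S, (x * a).re = 0 := by
  by_cases hreal : ∀ a ∈ S, a.im = 0
  · obtain ⟨x, hx, hx1, -⟩ := exists_re_eq_zero_norm_eq_one_re_mul_eq_zero 0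
    refine ⟨x, hx, hx1, fun a ha => ?_⟩
    rw [← re_add_im a, hreal a ha, add_zero, mul_coe_eq_smul, re_smul, hx, smul_zero]
  · push Not at hreal
    obtain ⟨u, huS, hu⟩ := hreal
    obtain ⟨x, hx, hx1, hxu⟩ := exists_re_eq_zero_norm_eq_one_re_mul_eq_zero u
    refine ⟨x, hx, hx1, fun a ha => ?_⟩
    rcases eq_or_ne u a with rfl | hne
    · exact hxu
    · exact re_mul_eq_zero_of_commute_s10 hx hu (hS huS ha hne) hxu

end Quaternion

theorem exists_perp_of_pairwise_commute_general (a b c d : ℍ[ℝ])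
    (hab : a * b = b * a) (hac : a * c = c * a) (had : a * d = d * a)
    (hbc : b * c = c * b) (hbd : b * d = d * b) (hcd : c * d = d * c) :
    ∃ x : ℍ[ℝ], x.re = 0 ∧ ‖x‖ = 1 ∧ (x * a).re = 0 ∧ (x * b).re = 0 ∧
      (x * c).re = 0 ∧ (x * d).re = 0 := by
  have hS : ({a, b, c, d} : Set ℍ[ℝ]).Pairwise Commute := by
    simp [Set.pairwise_insert_of_symm, forall_eq_or_imp, Commute, SemiconjBy, *]
  obtain ⟨x, hx, hx1, hre⟩ := exists_re_eq_zero_norm_eq_one_forall_re_mul_eq_zero hS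
  exact ⟨x, hx, hx1, hre a (by simp), hre b (by simp), hre c (by simp), hre d (by simp)⟩

/-- If four unit quaternions pairwise commute, then there is a purely imaginary unit
quaternion `x` with `Re(xa) = Re(xb) = Re(xc) = Re(xd) = 0`. -/
theorem exists_perp_of_pairwise_commute (a b c d : ℍ[ℝ])
    (ha : ‖a‖ = 1) (hb : ‖b‖ = 1) (hc : ‖c‖ = 1) (hd : ‖d‖ = 1)
    (hab : a * b = b * a) (hac : a * c = c * a) (had : a * d = d * a)
    (hbc : b * c = c * b) (hbd : b * d = d * b) (hcd : c * d = d * c) :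
    ∃ x : ℍ[ℝ], x.re = 0 ∧ ‖x‖ = 1 ∧ (x * a).re = 0 ∧ (x * b).re = 0 ∧
      (x * c).re = 0 ∧ (x * d).re = 0 :=
  exists_perp_of_pairwise_commute_general a b c d hab hac had hbc hbd hcd
end

section
/- The set of traceless representations of the fundamental group of the 2k-punctured sphere with abelian image, up to conjugation, is finite with exactly 2^{2k-2} elements when the number of punctures is 2k ≥ 2, and is empty when the number of punctures is odd. -/
open Quaternion

/-- Traceless abelian representations of the fundamental group of the `n`-punctured sphere:
tuples `(q₁, …, qₙ)` of pairwise commuting traceless unit quaternions with `q₁ ⋯ qₙ = 1`. -/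
def TracelessAbelianRep (n : ℕ) : Type :=
  { q : Fin n → ℍ[ℝ] // (∀ i, ‖q i‖ = 1) ∧ (∀ i, (q i).re = 0) ∧
      (∀ i j, q i * q j = q j * q i) ∧ (List.ofFn q).prod = 1 }

/-- Conjugacy of representations: `q'` is obtained from `q` by conjugating by a single
unit quaternion. -/
def RepConj (n : ℕ) (q q' : TracelessAbelianRep n) : Prop :=
  ∃ g : ℍ[ℝ], ‖g‖ = 1 ∧ ∀ i, q'.1 i = g * q.1 i * g⁻¹

/-!
Commuting traceless unit quaternions agree up to sign, because their product is real. So an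
abelian representation has the form `qᵢ = σᵢ u` with `u = q₀`, signs `σᵢ = ±1` and `σ₀ = 1`, and
since `u² = -1` the relation `q₁ ⋯ qₙ = 1` reads `(∏ σᵢ) u^n = 1`. For odd `n` the left side is
traceless, so no representation exists; for `n = 2k` the relation says `∏ σᵢ = (-1)^k`. Any two
traceless unit quaternions are conjugate, so the sign vector is a complete conjugacy invariant,
and there are `2^(2k-2)` sign vectors with `σ₀ = 1` and prescribed product.
-/

theorem List.prod_ofFn_smul {R A : Type*} [CommMonoid R] [Monoid A] [MulAction R A]
    [IsScalarTower R A A] [SMulCommClass R A A] {n : ℕ} (c : Fin n → R) (a : A) :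
    (List.ofFn fun i => c i • a).prod = (∏ i, c i) • a ^ n := by
  induction n with
  | zero => simp
  | succ n ih => rw [List.ofFn_succ, List.prod_cons, ih, Fin.prod_univ_succ, pow_succ',
      smul_mul_smul_comm]

theorem Units.int_smul_neg_one_pow_eq_one_iff {A : Type*} [Ring A] [CharZero A] (σ : ℤˣ)
    (k : ℕ) : σ • (-1 : A) ^ k = 1 ↔ σ = (-1) ^ k := by
  rcases Int.units_eq_one_or σ with rfl | rfl <;> rcases Nat.even_or_odd k with hk | hk <;>
    norm_num [hk.neg_one_pow]

section

variable {G : Type*} [CommGroup G]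

theorem Fin.card_prod_eq (m : ℕ) (c : G) :
    Nat.card {σ : Fin (m + 1) → G // ∏ i, σ i = c} = Nat.card G ^ m := by
  let e : {σ : Fin (m + 1) → G // ∏ i, σ i = c} ≃ (Fin m → G) :=
    { toFun := fun σ => Fin.init σ.1
      invFun := fun τ => ⟨Fin.snoc τ (c * (∏ i, τ i)⁻¹), by
        simp [Fin.prod_univ_castSucc]⟩
      left_inv := by
        rintro ⟨σ, rfl⟩
        ext1
        conv_rhs => rw [← Fin.snoc_init_self σ]
        simp [Fin.prod_univ_castSucc, Fin.init]
      right_inv := fun τ => Fin.init_snoc _ _ }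
  rw [Nat.card_congr e, Nat.card_fun, Nat.card_fin]

theorem Fin.card_head_eq_one_prod_eq (m : ℕ) (c : G) :
    Nat.card {σ : Fin (m + 2) → G // σ 0 = 1 ∧ ∏ i, σ i = c} = Nat.card G ^ m := by
  let e : {σ : Fin (m + 2) → G // σ 0 = 1 ∧ ∏ i, σ i = c} ≃
      {τ : Fin (m + 1) → G // ∏ i, τ i = c} :=
    { toFun := fun σ => ⟨Fin.tail σ.1, by
        have h := σ.2.2
        rwa [Fin.prod_univ_succ, σ.2.1, one_mul] at h⟩
      invFun := fun τ => ⟨Fin.cons 1 τ.1, by simpa [Fin.prod_univ_succ] using τ.2⟩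
      left_inv := by
        rintro ⟨σ, h0, -⟩
        ext1
        show Fin.cons 1 (Fin.tail σ) = σ
        rw [← h0, Fin.cons_self_tail]
      right_inv := fun τ => rfl }
  rw [Nat.card_congr e, Fin.card_prod_eq]

end

namespace Quaternion

instance : CharZero ℍ[ℝ] := charZero_of_injective_algebraMap (algebraMap ℝ ℍ[ℝ]).injective

def IsTracelessUnit (u : ℍ[ℝ]) : Prop := ‖u‖ = 1 ∧ u.re = 0

def unitI : ℍ[ℝ] := ⟨0, 1, 0, 0⟩

def unitJ : ℍ[ℝ] := ⟨0, 0, 1, 0⟩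

theorem norm_eq_one_iff_normSq_eq_one {u : ℍ[ℝ]} : ‖u‖ = 1 ↔ normSq u = 1 := by
  rw [normSq_eq_norm_mul_self]
  constructor
  · intro h; rw [h, one_mul]
  · intro h; nlinarith [norm_nonneg u]

theorem isTracelessUnit_unitI : IsTracelessUnit unitI :=
  ⟨norm_eq_one_iff_normSq_eq_one.2 (by rw [normSq_def']; simp [unitI]), rfl⟩

theorem isTracelessUnit_unitJ : IsTracelessUnit unitJ :=
  ⟨norm_eq_one_iff_normSq_eq_one.2 (by rw [normSq_def']; simp [unitJ]), rfl⟩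

theorem exists_isTracelessUnit_ne_ne_neg (p : ℍ[ℝ]) :
    ∃ r, IsTracelessUnit r ∧ r ≠ p ∧ r ≠ -p := by
  by_cases h : p = unitI ∨ p = -unitI
  · have hJI : unitJ ≠ unitI := fun h => by simpa [unitI, unitJ] using congrArg (·.imJ) h
    have hJnI : unitJ ≠ -unitI := fun h => by
      have h' := congrArg (·.imJ) h
      rw [imJ_neg] at h'
      norm_num [unitI, unitJ] at h'
    rcases h with rfl | rfl
    · exact ⟨unitJ, isTracelessUnit_unitJ, hJI, hJnI⟩
    · exact ⟨unitJ, isTracelessUnit_unitJ, hJnI, by rwa [neg_neg]⟩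
  · push Not at h
    exact ⟨unitI, isTracelessUnit_unitI, h.1.symm, fun h' => h.2 (by rw [h', neg_neg])⟩

namespace IsTracelessUnit

variable {p q u : ℍ[ℝ]}

theorem ne_zero (hu : IsTracelessUnit u) : u ≠ 0 := by
  rintro rfl; simpa using hu.1

theorem star_eq (hu : IsTracelessUnit u) : star u = -u := star_eq_neg.2 hu.2

theorem mul_self (hu : IsTracelessUnit u) : u * u = -1 := by
  rw [← neg_neg (u * u), ← neg_mul, ← hu.star_eq, star_mul_self,
    norm_eq_one_iff_normSq_eq_one.1 hu.1, coe_one]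

theorem pow_two_mul (hu : IsTracelessUnit u) (k : ℕ) : u ^ (2 * k) = (-1) ^ k := by
  rw [pow_mul, sq, hu.mul_self]

theorem neg (hu : IsTracelessUnit u) : IsTracelessUnit (-u) :=
  ⟨by rw [norm_neg, hu.1], by simp [hu.2]⟩

theorem ne_neg (hu : IsTracelessUnit u) : u ≠ -u :=
  fun h => hu.ne_zero (CharZero.eq_neg_self_iff.1 h)

theorem eq_or_eq_neg_of_commute (hp : IsTracelessUnit p) (hq : IsTracelessUnit q)
    (h : Commute p q) : q = p ∨ q = -p := by
  -- `p * q` is self-adjoint, hence real, and `q = -p * (p * q)`.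
  obtain ⟨c, hc⟩ : ∃ c : ℝ, p * q = c := ⟨_, star_eq_self.1 <| by
    rw [star_mul, hp.star_eq, hq.star_eq, neg_mul_neg, h.eq]⟩
  have hq_eq : q = -(c : ℍ[ℝ]) * p := by
    calc q = -(p * p) * q := by rw [hp.mul_self, neg_neg, one_mul]
      _ = -(c : ℍ[ℝ]) * p := by rw [neg_mul, mul_assoc, hc, ← coe_commutes, neg_mul]
  have hc : |c| = 1 := by
    simpa [hp.1, hq.1, norm_mul, norm_coe] using (congrArg norm hq_eq).symm
  rcases (abs_eq zero_le_one).1 hc with rfl | rfl <;> simp [hq_eq]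

theorem units_int_smul (hu : IsTracelessUnit u) (σ : ℤˣ) : IsTracelessUnit (σ • u) := by
  rcases Int.units_eq_one_or σ with rfl | rfl
  · simpa using hu
  · simpa using hu.neg

theorem units_int_smul_ne_one (hu : IsTracelessUnit u) (σ : ℤˣ) : σ • u ≠ 1 := fun h => by
  simpa [(hu.units_int_smul σ).2] using congrArg (·.re) h

theorem add_mul_eq_mul_add (hp : IsTracelessUnit p) (hq : IsTracelessUnit q) :
    (q + p) * p = q * (q + p) := by
  rw [add_mul, mul_add, hp.mul_self, hq.mul_self, add_comm]

theorem exists_mul_eq_mul (hp : IsTracelessUnit p) (hq : IsTracelessUnit q) :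
    ∃ g ≠ 0, g * p = q * g := by
  by_cases h : q = -p
  · -- pass from `p` to `-p` through a third traceless unit `r`
    obtain ⟨r, hr, hrp, hrnp⟩ := exists_isTracelessUnit_ne_ne_neg p
    refine ⟨(-p + r) * (r + p), mul_ne_zero ?_ ?_, ?_⟩
    · rw [neg_add_eq_sub, sub_ne_zero]; exact hrp
    · exact fun h0 => hrnp (eq_neg_of_add_eq_zero_left h0)
    · rw [h, mul_assoc, hp.add_mul_eq_mul_add hr, ← mul_assoc, hr.add_mul_eq_mul_add hp.neg,
        mul_assoc]
  · exact ⟨q + p, fun h0 => h (eq_neg_of_add_eq_zero_left h0), hp.add_mul_eq_mul_add hq⟩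

end IsTracelessUnit

theorem exists_norm_eq_one_conj {g p q : ℍ[ℝ]} (hg : g ≠ 0) (h : g * p = q * g) :
    ∃ g' : ℍ[ℝ], ‖g'‖ = 1 ∧ g' * p * g'⁻¹ = q := by
  have hng : ‖g‖ ≠ 0 := norm_ne_zero_iff.2 hg
  refine ⟨‖g‖⁻¹ • g, ?_, ?_⟩
  · rw [norm_smul, norm_inv, norm_norm, inv_mul_cancel₀ hng]
  · rw [mul_inv_eq_iff_eq_mul₀ (smul_ne_zero (inv_ne_zero hng) hg), smul_mul_assoc, h,
      mul_smul_comm]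

end Quaternion

namespace TracelessAbelianRep

variable {n : ℕ}

theorem isTracelessUnit (q : TracelessAbelianRep n) (i : Fin n) : IsTracelessUnit (q.1 i) :=
  ⟨q.2.1 i, q.2.2.1 i⟩

section

variable [NeZero n]

open Classical in
noncomputable def sign (q : TracelessAbelianRep n) (i : Fin n) : ℤˣ :=
  if q.1 i = q.1 0 then 1 else -1

theorem sign_smul (q : TracelessAbelianRep n) (i : Fin n) : q.sign i • q.1 0 = q.1 i := by
  unfold sign
  split_ifs with h
  · rw [one_smul, h]
  · have := (q.isTracelessUnit 0).eq_or_eq_neg_of_commute (q.isTracelessUnit i) (q.2.2.2.1 0 i)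
    rw [Units.neg_smul, one_smul, this.resolve_left h]

theorem sign_zero (q : TracelessAbelianRep n) : q.sign 0 = 1 := if_pos rfl

theorem list_prod_eq (q : TracelessAbelianRep n) :
    (List.ofFn q.1).prod = (∏ i, q.sign i) • q.1 0 ^ n := by
  rw [← List.prod_ofFn_smul]
  simp only [sign_smul]

theorem sign_eq_sign_iff (q q' : TracelessAbelianRep n) : q.sign = q'.sign ↔ RepConj n q q' := by
  constructor
  · intro h
    obtain ⟨g, hg, hgq⟩ := (q.isTracelessUnit 0).exists_mul_eq_mul (q'.isTracelessUnit 0)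
    obtain ⟨g, hg1, hgq⟩ := exists_norm_eq_one_conj hg hgq
    refine ⟨g, hg1, fun i => ?_⟩
    rw [← sign_smul, ← sign_smul q, ← h, ← hgq, mul_smul_comm, smul_mul_assoc]
  · rintro ⟨g, hg1, hgq⟩
    have hg : g ≠ 0 := by rintro rfl; simp at hg1
    ext1 i
    have hconj : q'.1 i = q'.1 0 ↔ q.1 i = q.1 0 := by
      rw [hgq, hgq, mul_left_inj' (inv_ne_zero hg), mul_right_inj' hg]
    classical
    exact if_congr hconj.symm rfl rfl

end


theorem prod_sign_of_even {k : ℕ} [NeZero (2 * k)] (q : TracelessAbelianRep (2 * k)) :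
    ∏ i, q.sign i = (-1) ^ k := by
  have h := q.2.2.2.2
  rwa [list_prod_eq, (q.isTracelessUnit 0).pow_two_mul,
    Units.int_smul_neg_one_pow_eq_one_iff] at h

theorem isEmpty_of_odd {n : ℕ} (hn : Odd n) : IsEmpty (TracelessAbelianRep n) := by
  obtain ⟨k, rfl⟩ := hn
  refine ⟨fun q => ?_⟩
  have hu := q.isTracelessUnit 0
  have hpow : q.1 0 ^ (2 * k + 1) = ((-1 : ℤˣ) ^ k) • q.1 0 := by
    rw [pow_succ, hu.pow_two_mul]
    rcases Nat.even_or_odd k with hk | hk <;> simp [hk.neg_one_pow]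
  have h := q.2.2.2.2
  rw [list_prod_eq, hpow, smul_smul] at h
  exact hu.units_int_smul_ne_one _ h

def ofSigns (k : ℕ) (σ : Fin (2 * k) → ℤˣ) (hσ : ∏ i, σ i = (-1) ^ k) :
    TracelessAbelianRep (2 * k) :=
  ⟨fun i => σ i • unitI, fun i => (isTracelessUnit_unitI.units_int_smul (σ i)).1,
    fun i => (isTracelessUnit_unitI.units_int_smul (σ i)).2,
    fun _ _ => (((Commute.refl unitI).smul_left _).smul_right _).eq, by
      rw [List.prod_ofFn_smul, hσ, isTracelessUnit_unitI.pow_two_mul, ← smul_pow,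
        Units.neg_smul, one_smul, neg_neg, one_pow]⟩

theorem sign_ofSigns {k : ℕ} [NeZero (2 * k)] {σ : Fin (2 * k) → ℤˣ} (hσ : ∏ i, σ i = (-1) ^ k)
    (hσ0 : σ 0 = 1) : (ofSigns k σ hσ).sign = σ := by
  funext i
  rcases Int.units_eq_one_or (σ i) with h | h <;>
    simp [sign, ofSigns, h, hσ0, isTracelessUnit_unitI.ne_neg.symm]

noncomputable def quotEquivSigns (k : ℕ) [NeZero (2 * k)] :
    Quot (RepConj (2 * k)) ≃ {σ : Fin (2 * k) → ℤˣ // σ 0 = 1 ∧ ∏ i, σ i = (-1) ^ k} :=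
  Equiv.ofBijective
    (Quot.lift (fun q => ⟨q.sign, q.sign_zero, q.prod_sign_of_even⟩)
      fun q q' h => Subtype.ext ((sign_eq_sign_iff q q').2 h))
    ⟨by
      rintro ⟨q⟩ ⟨q'⟩ h
      exact Quot.sound ((sign_eq_sign_iff q q').1 (congrArg Subtype.val h)),
    by
      rintro ⟨σ, hσ0, hσ⟩
      exact ⟨Quot.mk _ (ofSigns k σ hσ), Subtype.ext (sign_ofSigns hσ hσ0)⟩⟩

end TracelessAbelianRep

/-- The set of traceless representations with abelian image, up to conjugation, is finite
with exactly `2^(2k-2)` elements when the number of punctures is `2k ≥ 2`, and is empty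
when the number of punctures is odd. -/
theorem abelian_locus_card :
    (∀ k : ℕ, 1 ≤ k →
      Finite (Quot (RepConj (2 * k))) ∧
      Nat.card (Quot (RepConj (2 * k))) = 2 ^ (2 * k - 2)) ∧
    (∀ n : ℕ, Odd n → IsEmpty (TracelessAbelianRep n)) := by
  refine ⟨fun k hk => ?_, fun n hn => TracelessAbelianRep.isEmpty_of_odd hn⟩
  obtain ⟨m, rfl⟩ : ∃ m, k = m + 1 := ⟨k - 1, by omega⟩
  have e := TracelessAbelianRep.quotEquivSigns (m + 1)
  refine ⟨Finite.of_equiv _ e.symm, ?_⟩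
  calc Nat.card (Quot (RepConj (2 * (m + 1))))
      _ = Nat.card ℤˣ ^ (2 * m) := (Nat.card_congr e).trans (Fin.card_head_eq_one_prod_eq _ _)
      _ = 2 ^ (2 * (m + 1) - 2) := by
        rw [Nat.card_eq_fintype_card, Fintype.card_units_int, Nat.mul_add_one, Nat.add_sub_cancel]
end

section
/- The (2m-2)×(2m-2) integer matrix A with A_{ii} = 0, A_{ij} = (-1)^{i+j+1} for i > j, and A_{ij} = (-1)^{i+j} for i < j, has odd determinant² (i.e., det(A²) is odd) and is therefore invertible over ℚ. -/
open Matrix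

theorem Matrix.det_one_add_of_const_one {ι R : Type*} [Fintype ι] [DecidableEq ι] [CommRing R] :
    (1 + of fun _ _ : ι => (1 : R)).det = 1 + Fintype.card ι := by
  have hrank_one : (of fun _ _ : ι => (1 : R)) =
      replicateCol (Fin 1) (fun _ : ι => (1 : R)) * replicateRow (Fin 1) (fun _ : ι => (1 : R)) := by
    ext i j
    simp [mul_apply]
  rw [hrank_one]
  refine (det_one_add_replicateCol_mul_replicateRow _ _).trans ?_
  simp [dotProduct]

theorem Matrix.map_intCast_zmod_two_eq_one_add_of_const_one {ι : Type*} [DecidableEq ι]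
    (A : Matrix ι ι ℤ) (hdiag : ∀ i, Even (A i i)) (hoff : ∀ i j, i ≠ j → Odd (A i j)) :
    A.map (Int.cast : ℤ → ZMod 2) = 1 + of fun _ _ => 1 := by
  ext i j
  by_cases hij : i = j
  · subst hij
    rw [map_apply, (ZMod.intCast_eq_zero_iff_even).2 (hdiag i), add_apply, one_apply_eq,
      of_apply]
    decide
  · rw [map_apply, (ZMod.intCast_eq_one_iff_odd).2 (hoff i j hij), add_apply, one_apply_ne hij,
      of_apply, zero_add]

/-- Modulo 2 such a matrix is `J - I`, whose determinant `±(n - 1)` is odd for `n` even. -/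
theorem Matrix.odd_det_of_even_diag_of_odd_offDiag {ι : Type*} [Fintype ι] [DecidableEq ι]
    (hcard : Even (Fintype.card ι)) (A : Matrix ι ι ℤ) (hdiag : ∀ i, Even (A i i))
    (hoff : ∀ i j, i ≠ j → Odd (A i j)) : Odd A.det := by
  rw [← ZMod.intCast_eq_one_iff_odd, Int.cast_det,
    map_intCast_zmod_two_eq_one_add_of_const_one A hdiag hoff, det_one_add_of_const_one,
    (ZMod.natCast_eq_zero_iff_even).2 hcard, add_zero]

theorem hessian_block_invertible_general (m : ℕ)
    (A : Matrix (Fin (2 * m - 2)) (Fin (2 * m - 2)) ℤ)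
    (hA : ∀ i j : Fin (2 * m - 2), A i j =
      if i = j then 0
      else if (j : ℕ) < (i : ℕ) then (-1) ^ ((i : ℕ) + (j : ℕ) + 1)
      else (-1) ^ ((i : ℕ) + (j : ℕ))) :
    Odd (A * A).det ∧ IsUnit (A.map (fun x => (x : ℚ))) := by
  have hodd : Odd A.det := by
    refine odd_det_of_even_diag_of_odd_offDiag ?_ A (fun i => by simp [hA]) fun i j hij => ?_
    · rw [Fintype.card_fin]
      exact ⟨m - 1, by omega⟩
    · rw [hA, if_neg hij]
      split_ifs <;> exact (odd_neg.2 odd_one).pow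
  refine ⟨(det_mul A A).symm ▸ hodd.mul hodd, ?_⟩
  rw [isUnit_iff_isUnit_det, ← Int.cast_det, isUnit_iff_ne_zero, Int.cast_ne_zero]
  rintro hzero
  exact Int.not_odd_iff_even.2 (hzero ▸ Even.zero) hodd

/-- The `(2m-2) × (2m-2)` integer matrix `A` with `A_{ii} = 0`, `A_{ij} = (-1)^{i+j+1}` for
`i > j` and `A_{ij} = (-1)^{i+j}` for `i < j` has `det(A²)` odd, and hence is invertible
over `ℚ`. -/
theorem hessian_block_invertible (m : ℕ) (hm : 2 ≤ m)
    (A : Matrix (Fin (2 * m - 2)) (Fin (2 * m - 2)) ℤ)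
    (hA : ∀ i j : Fin (2 * m - 2), A i j =
      if i = j then 0
      else if (j : ℕ) < (i : ℕ) then (-1) ^ ((i : ℕ) + (j : ℕ) + 1)
      else (-1) ^ ((i : ℕ) + (j : ℕ))) :
    Odd (A * A).det ∧ IsUnit (A.map (fun x => (x : ℚ))) :=
  hessian_block_invertible_general m A hA
end
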